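/- Fix q > 1, T ∈ (0,∞), and a constant A > 0, and assume 0 ≤ a_{i,j} = a_{j,i} ≤ A(i+j) for all i,j ≥ 1. Let n ≥ 2 and let w^n be the unique nonnegative C^1 solution on [0,T] of the truncated coagulation–collisional-breakage system with nonnegative initial data (w_i^0)_{i=1}^n of first moment at most ‖w^0‖. Then, with ȷ_q > 0 the constant (depending only on q) for which (i+j)((i+j)^q − i^q − j^q) ≤ ȷ_q (i j^q + i^q j) for all i,j ≥ 1, one has ∑_{i=1}^{n} i^q w_i^n(t) ≤ exp(A ȷ_q ‖w^0‖ t) ∑_{i=1}^{n} i^q w_i^0 for all t ∈ [0,T]. -/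

import Mathlib

/-!
Pairing the system with weights `c` and symmetrising writes `∑ᵢ cᵢ ẇᵢ` as half a sum over
colliding pairs `(l, m)`, `l + m ≤ n`, of `(c_{l+m} - c_l - c_m) a_{l,m} w_l w_m`, plus a
nonpositive breakage correction whenever the fragments of `(l, m)` carry at most the weight
`c_{l+m}`. For `cᵢ = i` mass conservation makes the pair sum vanish, so the first moment never
exceeds `‖w⁰‖`. For `cᵢ = i^q` fragmentation can only lower `∑ s^q` (all fragments have size
`s ≤ l + m`), and `a_{l,m} ≤ A (l + m)` together with the defining inequality of `ȷ_q` bounds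
the pair sum by `A ȷ_q M₁ M_q ≤ A ȷ_q ‖w⁰‖ M_q`, where `M_r = ∑ᵢ i^r wᵢ`; Grönwall's
inequality concludes.
-/

/-- The right-hand side of the truncated discrete coagulation equations with
collisional breakage. -/
noncomputable def truncRHS (a p : ℕ → ℕ → ℝ) (N : ℕ → ℕ → ℕ → ℝ) (n i : ℕ)
    (w : ℕ → ℝ) : ℝ :=
    (1/2) * ∑ j ∈ Finset.Icc 1 (i-1), p j (i-j) * a j (i-j) * w j * w (i-j)
  - ∑ j ∈ Finset.Icc 1 (n-i), a i j * w i * w j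
  + (1/2) * ∑ j ∈ Finset.Icc (i+1) n, ∑ k ∈ Finset.Icc 1 (j-1),
      N (j-k) k i * (1 - p (j-k) k) * a (j-k) k * w (j-k) * w k

open Finset Real

theorem le_mul_exp_of_hasDerivWithinAt_le {f f' : ℝ → ℝ} {a b K : ℝ}
    (hf : ∀ x ∈ Set.Icc a b, HasDerivWithinAt f (f' x) (Set.Icc a b) x)
    (bound : ∀ x ∈ Set.Ico a b, f' x ≤ K * f x) :
    ∀ x ∈ Set.Icc a b, f x ≤ f a * exp (K * (x - a)) := by
  intro x hx
  have h := le_gronwallBound_of_liminf_deriv_right_le (f' := f') (δ := f a) (ε := 0)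
    (fun y hy => (hf y hy).continuousWithinAt)
    (fun y hy _ hr => ((hf y (Set.Ico_subset_Icc_self hy)).mono_of_mem_nhdsWithin
      (Icc_mem_nhdsGE_of_mem hy)).liminf_right_slope_le hr)
    le_rfl (by simpa using bound) x hx
  rwa [gronwallBound_ε0] at h

theorem Real.rpow_le_rpow_sub_one_mul {x L q : ℝ} (hq : 1 ≤ q) (hx : 0 ≤ x) (hxL : x ≤ L) :
    x ^ q ≤ L ^ (q - 1) * x := by
  calc x ^ q = x ^ (q - 1) * x := by
        rw [← rpow_add_one' hx (by linarith), sub_add_cancel]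
    _ ≤ L ^ (q - 1) * x := by gcongr

theorem Real.sum_rpow_mul_le_of_sum_mul_eq {ι : Type*} {s : Finset ι} {x ν : ι → ℝ} {L q : ℝ}
    (hq : 1 ≤ q) (hx : ∀ i ∈ s, 0 ≤ x i ∧ x i ≤ L) (hν : ∀ i ∈ s, 0 ≤ ν i)
    (hmass : ∑ i ∈ s, x i * ν i = L) :
    ∑ i ∈ s, x i ^ q * ν i ≤ L ^ q := by
  have hL : 0 ≤ L := hmass ▸ sum_nonneg fun i hi => mul_nonneg (hx i hi).1 (hν i hi)
  calc ∑ i ∈ s, x i ^ q * ν i ≤ ∑ i ∈ s, L ^ (q - 1) * (x i * ν i) :=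
        sum_le_sum fun i hi => by
          rw [← mul_assoc]
          exact mul_le_mul_of_nonneg_right
            (rpow_le_rpow_sub_one_mul hq (hx i hi).1 (hx i hi).2) (hν i hi)
    _ = L ^ q := by rw [← mul_sum, hmass, ← rpow_add_one' hL (by linarith), sub_add_cancel]

theorem Finset.sum_product_mul_add_mul_swap {ι R : Type*} [CommSemiring R] (s : Finset ι)
    (u v : ι → R) :
    ∑ x ∈ s ×ˢ s, (u x.1 * v x.2 + v x.1 * u x.2) = 2 * (∑ i ∈ s, u i) * ∑ i ∈ s, v i := by
  rw [sum_product]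
  simp only [sum_add_distrib, ← mul_sum, ← sum_mul]
  ring

theorem Real.rpow_add_sub_rpow_sub_rpow_mul_le {x y q A jq k : ℝ} (hx : 0 ≤ x) (hy : 0 ≤ y)
    (hq : 1 ≤ q) (hA : 0 ≤ A) (hk : k ≤ A * (x + y))
    (hjq : (x + y) * ((x + y) ^ q - x ^ q - y ^ q) ≤ jq * (x * y ^ q + x ^ q * y)) :
    ((x + y) ^ q - x ^ q - y ^ q) * k ≤ A * jq * (x * y ^ q + x ^ q * y) := by
  have hsuper := add_rpow_le_rpow_add hx hy hq
  calc ((x + y) ^ q - x ^ q - y ^ q) * k ≤ ((x + y) ^ q - x ^ q - y ^ q) * (A * (x + y)) :=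
        mul_le_mul_of_nonneg_left hk (by linarith)
    _ = A * ((x + y) * ((x + y) ^ q - x ^ q - y ^ q)) := by ring
    _ ≤ A * (jq * (x * y ^ q + x ^ q * y)) := mul_le_mul_of_nonneg_left hjq hA
    _ = A * jq * (x * y ^ q + x ^ q * y) := by ring

def collisionPairs (n : ℕ) : Finset (ℕ × ℕ) :=
  (Icc 1 n ×ˢ Icc 1 n).filter fun x => x.1 + x.2 ≤ n

theorem mem_collisionPairs {n : ℕ} {x : ℕ × ℕ} :
    x ∈ collisionPairs n ↔ 1 ≤ x.1 ∧ 1 ≤ x.2 ∧ x.1 + x.2 ≤ n := by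
  simp only [collisionPairs, mem_filter, mem_product, mem_Icc]
  omega

theorem collisionPairs_subset (n : ℕ) : collisionPairs n ⊆ Icc 1 n ×ˢ Icc 1 n :=
  filter_subset _ _

section Reindexing

variable {M : Type*} [AddCommMonoid M] {n : ℕ}

theorem sum_collisionPairs_swap (F : ℕ → ℕ → M) :
    ∑ x ∈ collisionPairs n, F x.2 x.1 = ∑ x ∈ collisionPairs n, F x.1 x.2 :=
  sum_nbij' Prod.swap Prod.swap (by simp [mem_collisionPairs]; omega)
    (by simp [mem_collisionPairs]; omega) (by simp) (by simp) (by simp)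

theorem sum_Icc_sum_Icc_sub_eq_sum_collisionPairs (F : ℕ → ℕ → M) :
    ∑ i ∈ Icc 1 n, ∑ j ∈ Icc 1 (n - i), F i j = ∑ x ∈ collisionPairs n, F x.1 x.2 :=
  (sum_finset_product (f := fun x => F x.1 x.2) (collisionPairs n) (Icc 1 n)
    (fun i => Icc 1 (n - i)) fun x => by simp only [mem_collisionPairs, mem_Icc]; omega).symm

theorem sum_Icc_sum_Icc_pred_eq_sum_collisionPairs (F : ℕ → ℕ → M) :
    ∑ i ∈ Icc 1 n, ∑ j ∈ Icc 1 (i - 1), F i j = ∑ x ∈ collisionPairs n, F (x.1 + x.2) x.1 := by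
  rw [sum_sigma']
  refine sum_nbij' (fun y => (y.2, y.1 - y.2)) (fun x => ⟨x.1 + x.2, x.1⟩) ?_ ?_ ?_ ?_ ?_
  · simp only [mem_sigma, mem_Icc, mem_collisionPairs]; omega
  · simp only [mem_sigma, mem_Icc, mem_collisionPairs]; omega
  · rintro ⟨i, j⟩ h
    simp only [mem_sigma, mem_Icc] at h
    simp only [Sigma.mk.injEq, heq_eq_eq, and_true]
    omega
  · rintro ⟨l, m⟩ _
    simp
  · rintro ⟨i, j⟩ h
    simp only [mem_sigma, mem_Icc] at h
    simp only [Nat.add_sub_cancel' (by omega : j ≤ i)]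

theorem sum_Icc_sum_Icc_succ_eq_sum_Icc_sum_Icc_pred (F : ℕ → ℕ → M) :
    ∑ i ∈ Icc 1 n, ∑ j ∈ Icc (i + 1) n, F i j = ∑ j ∈ Icc 1 n, ∑ i ∈ Icc 1 (j - 1), F i j :=
  sum_comm' fun i j => by simp only [mem_Icc]; omega

end Reindexing

section WeakForm

variable {n : ℕ} (c : ℕ → ℝ)

theorem sum_mul_sum_coagulation (g : ℕ → ℕ → ℝ) :
    ∑ i ∈ Icc 1 n, c i * ∑ j ∈ Icc 1 (i - 1), g j (i - j)
      = ∑ x ∈ collisionPairs n, c (x.1 + x.2) * g x.1 x.2 := by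
  simp only [mul_sum]
  rw [sum_Icc_sum_Icc_pred_eq_sum_collisionPairs]
  simp only [Nat.add_sub_cancel_left]

theorem sum_mul_sum_loss {K : ℕ → ℕ → ℝ} (hK : ∀ i j, K i j = K j i) :
    ∑ i ∈ Icc 1 n, c i * ∑ j ∈ Icc 1 (n - i), K i j
      = (1 / 2) * ∑ x ∈ collisionPairs n, (c x.1 + c x.2) * K x.1 x.2 := by
  have swapped : ∑ x ∈ collisionPairs n, c x.2 * K x.1 x.2
      = ∑ x ∈ collisionPairs n, c x.1 * K x.1 x.2 := by
    rw [← sum_collisionPairs_swap fun l m => c l * K l m]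
    exact sum_congr rfl fun x _ => by rw [hK]
  conv_lhs => simp only [mul_sum]
  rw [sum_Icc_sum_Icc_sub_eq_sum_collisionPairs fun i j => c i * K i j]
  simp only [add_mul, sum_add_distrib, swapped]
  ring

theorem sum_mul_sum_breakage (H : ℕ → ℕ → ℕ → ℝ) :
    ∑ i ∈ Icc 1 n, c i * ∑ j ∈ Icc (i + 1) n, ∑ k ∈ Icc 1 (j - 1), H (j - k) k i
      = ∑ x ∈ collisionPairs n, ∑ s ∈ Icc 1 (x.1 + x.2 - 1), c s * H x.1 x.2 s := by
  simp only [mul_sum]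
  rw [sum_Icc_sum_Icc_succ_eq_sum_Icc_sum_Icc_pred, sum_congr rfl fun j _ => sum_comm,
    sum_Icc_sum_Icc_pred_eq_sum_collisionPairs,
    ← sum_collisionPairs_swap fun l m => ∑ s ∈ Icc 1 (l + m - 1), c s * H l m s]
  simp only [Nat.add_sub_cancel_left, add_comm]

theorem sum_mul_truncRHS (a p : ℕ → ℕ → ℝ) (N : ℕ → ℕ → ℕ → ℝ) (w : ℕ → ℝ)
    (ha_symm : ∀ i j, a i j = a j i) :
    ∑ i ∈ Icc 1 n, c i * truncRHS a p N n i w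
      = (1 / 2) * ∑ x ∈ collisionPairs n,
          (p x.1 x.2 * c (x.1 + x.2) - c x.1 - c x.2
            + (1 - p x.1 x.2) * ∑ s ∈ Icc 1 (x.1 + x.2 - 1), c s * N x.1 x.2 s)
          * (a x.1 x.2 * w x.1 * w x.2) := by
  have expand : ∀ i, c i * truncRHS a p N n i w
      = (1 / 2) * (c i * ∑ j ∈ Icc 1 (i - 1), p j (i - j) * a j (i - j) * w j * w (i - j))
        - c i * ∑ j ∈ Icc 1 (n - i), a i j * w i * w j
        + (1 / 2) * (c i * ∑ j ∈ Icc (i + 1) n, ∑ k ∈ Icc 1 (j - 1),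
            N (j - k) k i * (1 - p (j - k) k) * a (j - k) k * w (j - k) * w k) := by
    intro i; simp only [truncRHS]; ring
  simp only [expand, sum_add_distrib, sum_sub_distrib, ← mul_sum]
  rw [sum_mul_sum_coagulation c fun l m => p l m * a l m * w l * w m,
    sum_mul_sum_loss c (K := fun l m => a l m * w l * w m) fun l m => by rw [ha_symm]; ring,
    sum_mul_sum_breakage c fun l m s => N l m s * (1 - p l m) * a l m * w l * w m,
    mul_sum, mul_sum, mul_sum, mul_sum, ← sum_sub_distrib, ← sum_add_distrib]
  refine sum_congr rfl fun x _ => ?_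
  simp only [← mul_assoc, ← sum_mul]
  ring

section MomentBounds

variable {a p : ℕ → ℕ → ℝ} {N : ℕ → ℕ → ℕ → ℝ} {n : ℕ} {w : ℕ → ℝ}

theorem sum_mul_truncRHS_le (ha_nonneg : ∀ i j, 0 ≤ a i j) (ha_symm : ∀ i j, a i j = a j i)
    (hp_le : ∀ i j, p i j ≤ 1) (hw : ∀ i ∈ Icc 1 n, 0 ≤ w i) (c : ℕ → ℝ)
    (hfrag : ∀ x ∈ collisionPairs n,
      ∑ s ∈ Icc 1 (x.1 + x.2 - 1), c s * N x.1 x.2 s ≤ c (x.1 + x.2)) :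
    ∑ i ∈ Icc 1 n, c i * truncRHS a p N n i w
      ≤ (1 / 2) * ∑ x ∈ collisionPairs n,
          (c (x.1 + x.2) - c x.1 - c x.2) * (a x.1 x.2 * w x.1 * w x.2) := by
  rw [sum_mul_truncRHS c a p N w ha_symm]
  refine mul_le_mul_of_nonneg_left (sum_le_sum fun x hx => ?_) (by norm_num)
  obtain ⟨hx₁, hx₂⟩ := mem_product.mp (collisionPairs_subset n hx)
  have hrate : 0 ≤ a x.1 x.2 * w x.1 * w x.2 :=
    mul_nonneg (mul_nonneg (ha_nonneg _ _) (hw _ hx₁)) (hw _ hx₂)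
  refine mul_le_mul_of_nonneg_right ?_ hrate
  nlinarith [mul_le_mul_of_nonneg_left (hfrag x hx) (sub_nonneg.2 (hp_le x.1 x.2))]

theorem sum_natCast_mul_truncRHS_nonpos (ha_nonneg : ∀ i j, 0 ≤ a i j)
    (ha_symm : ∀ i j, a i j = a j i) (hp_le : ∀ i j, p i j ≤ 1)
    (hN_mass : ∀ i j : ℕ, 1 ≤ i → 1 ≤ j →
      ∑ s ∈ Icc 1 (i + j - 1), (s : ℝ) * N i j s = (i : ℝ) + (j : ℝ))
    (hw : ∀ i ∈ Icc 1 n, 0 ≤ w i) :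
    ∑ i ∈ Icc 1 n, (i : ℝ) * truncRHS a p N n i w ≤ 0 := by
  refine (sum_mul_truncRHS_le ha_nonneg ha_symm hp_le hw (fun i => (i : ℝ)) ?_).trans_eq ?_
  · intro x hx
    obtain ⟨hx₁, hx₂, -⟩ := mem_collisionPairs.mp hx
    rw [hN_mass _ _ hx₁ hx₂, Nat.cast_add]
  · simp

theorem sum_rpow_mul_truncRHS_le {q A jq : ℝ} (hq : 1 ≤ q) (hA : 0 ≤ A) (hjq : 0 ≤ jq)
    (ha_nonneg : ∀ i j, 0 ≤ a i j) (ha_symm : ∀ i j, a i j = a j i)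
    (ha_bound : ∀ i j, 1 ≤ i → 1 ≤ j → a i j ≤ A * ((i : ℝ) + (j : ℝ)))
    (hp_le : ∀ i j, p i j ≤ 1) (hN_nonneg : ∀ i j s, 0 ≤ N i j s)
    (hN_mass : ∀ i j : ℕ, 1 ≤ i → 1 ≤ j →
      ∑ s ∈ Icc 1 (i + j - 1), (s : ℝ) * N i j s = (i : ℝ) + (j : ℝ))
    (hjq_ineq : ∀ i j : ℕ, 1 ≤ i → 1 ≤ j →
      ((i : ℝ) + (j : ℝ)) * (((i : ℝ) + (j : ℝ)) ^ q - (i : ℝ) ^ q - (j : ℝ) ^ q)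
        ≤ jq * ((i : ℝ) * (j : ℝ) ^ q + (i : ℝ) ^ q * (j : ℝ)))
    (hw : ∀ i ∈ Icc 1 n, 0 ≤ w i) :
    ∑ i ∈ Icc 1 n, (i : ℝ) ^ q * truncRHS a p N n i w
      ≤ A * jq * (∑ i ∈ Icc 1 n, (i : ℝ) * w i) * ∑ i ∈ Icc 1 n, (i : ℝ) ^ q * w i := by
  set cross : ℕ × ℕ → ℝ := fun x =>
    (x.1 : ℝ) * w x.1 * ((x.2 : ℝ) ^ q * w x.2) + (x.1 : ℝ) ^ q * w x.1 * ((x.2 : ℝ) * w x.2)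
  have hfrag : ∀ x ∈ collisionPairs n,
      ∑ s ∈ Icc 1 (x.1 + x.2 - 1), (s : ℝ) ^ q * N x.1 x.2 s ≤ ((x.1 + x.2 : ℕ) : ℝ) ^ q := by
    intro x hx
    obtain ⟨hx₁, hx₂, -⟩ := mem_collisionPairs.mp hx
    refine sum_rpow_mul_le_of_sum_mul_eq hq (fun s hs => ⟨s.cast_nonneg, ?_⟩)
      (fun s _ => hN_nonneg _ _ s) (by rw [hN_mass _ _ hx₁ hx₂, Nat.cast_add])
    exact Nat.cast_le.mpr (by simp only [mem_Icc] at hs; omega)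
  have hkernel : ∀ x ∈ collisionPairs n,
      (((x.1 + x.2 : ℕ) : ℝ) ^ q - (x.1 : ℝ) ^ q - (x.2 : ℝ) ^ q) * (a x.1 x.2 * w x.1 * w x.2)
        ≤ A * jq * cross x := by
    intro x hx
    obtain ⟨hx₁, hx₂, -⟩ := mem_collisionPairs.mp hx
    obtain ⟨hw₁, hw₂⟩ := mem_product.mp (collisionPairs_subset n hx)
    have h := mul_le_mul_of_nonneg_right (rpow_add_sub_rpow_sub_rpow_mul_le x.1.cast_nonneg
      x.2.cast_nonneg hq hA (ha_bound _ _ hx₁ hx₂) (hjq_ineq _ _ hx₁ hx₂))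
      (mul_nonneg (hw _ hw₁) (hw _ hw₂))
    rw [Nat.cast_add]
    linarith
  have hcross : ∀ x ∈ Icc 1 n ×ˢ Icc 1 n, 0 ≤ A * jq * cross x := by
    intro x hx
    have := hw _ (mem_product.mp hx).1
    have := hw _ (mem_product.mp hx).2
    positivity
  calc ∑ i ∈ Icc 1 n, (i : ℝ) ^ q * truncRHS a p N n i w
      ≤ (1 / 2) * ∑ x ∈ collisionPairs n,
          (((x.1 + x.2 : ℕ) : ℝ) ^ q - (x.1 : ℝ) ^ q - (x.2 : ℝ) ^ q)
            * (a x.1 x.2 * w x.1 * w x.2) :=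
        sum_mul_truncRHS_le ha_nonneg ha_symm hp_le hw _ hfrag
    _ ≤ (1 / 2) * ∑ x ∈ collisionPairs n, A * jq * cross x :=
        mul_le_mul_of_nonneg_left (sum_le_sum hkernel) (by norm_num)
    _ ≤ (1 / 2) * ∑ x ∈ Icc 1 n ×ˢ Icc 1 n, A * jq * cross x :=
        mul_le_mul_of_nonneg_left (sum_le_sum_of_subset_of_nonneg (collisionPairs_subset n)
          fun x hx _ => hcross x hx) (by norm_num)
    _ = A * jq * (∑ i ∈ Icc 1 n, (i : ℝ) * w i) * ∑ i ∈ Icc 1 n, (i : ℝ) ^ q * w i := by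
        rw [← mul_sum, show ∑ x ∈ Icc 1 n ×ˢ Icc 1 n, cross x = _ from
          sum_product_mul_add_mul_swap _ (fun i : ℕ => (i : ℝ) * w i) fun i => (i : ℝ) ^ q * w i]
        ring

end MomentBounds

theorem truncated_q_moment_estimate_general
    (q : ℝ) (hq : 1 < q) (T : ℝ) (A : ℝ) (hA : 0 < A)
    (a p : ℕ → ℕ → ℝ) (N : ℕ → ℕ → ℕ → ℝ)
    (ha_nonneg : ∀ i j, 0 ≤ a i j) (ha_symm : ∀ i j, a i j = a j i)
    (ha_bound : ∀ i j, 1 ≤ i → 1 ≤ j → a i j ≤ A * ((i : ℝ) + (j : ℝ)))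
    (hp_le : ∀ i j, p i j ≤ 1)
    (hN_nonneg : ∀ i j s, 0 ≤ N i j s)
    (hN_mass : ∀ i j, 1 ≤ i → 1 ≤ j →
      ∑ s ∈ Finset.Icc 1 (i+j-1), (Nat.cast s : ℝ) * N i j s = (i : ℝ) + (j : ℝ))
    (n : ℕ)
    (w : ℕ → ℝ → ℝ)
    (hw_nonneg : ∀ i ∈ Finset.Icc 1 n, ∀ t ∈ Set.Icc (0:ℝ) T, 0 ≤ w i t)
    (hw_ode : ∀ i ∈ Finset.Icc 1 n, ∀ t ∈ Set.Icc (0:ℝ) T,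
      HasDerivWithinAt (w i) (truncRHS a p N n i (fun j => w j t)) (Set.Icc 0 T) t)
    (norm0 : ℝ) (hnorm0 : ∑ i ∈ Finset.Icc 1 n, (Nat.cast i : ℝ) * w i 0 ≤ norm0)
    (jq : ℝ) (hjq : 0 < jq)
    (hjq_ineq : ∀ i j : ℕ, 1 ≤ i → 1 ≤ j →
      ((i : ℝ) + (j : ℝ)) * (((i : ℝ) + (j : ℝ)) ^ q - (i : ℝ) ^ q - (j : ℝ) ^ q)
        ≤ jq * ((i : ℝ) * (j : ℝ) ^ q + (i : ℝ) ^ q * (j : ℝ))) :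
    ∀ t ∈ Set.Icc (0:ℝ) T,
      ∑ i ∈ Finset.Icc 1 n, (Nat.cast i : ℝ) ^ q * w i t
        ≤ Real.exp (A * jq * norm0 * t)
            * ∑ i ∈ Finset.Icc 1 n, (Nat.cast i : ℝ) ^ q * w i 0 := by
  have hw : ∀ s ∈ Set.Ico (0:ℝ) T, ∀ i ∈ Icc 1 n, 0 ≤ w i s :=
    fun s hs i hi => hw_nonneg i hi s (Set.Ico_subset_Icc_self hs)
  have hmoment : ∀ c : ℕ → ℝ, ∀ s ∈ Set.Icc (0:ℝ) T,
      HasDerivWithinAt (fun s => ∑ i ∈ Icc 1 n, c i * w i s)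
        (∑ i ∈ Icc 1 n, c i * truncRHS a p N n i (fun j => w j s)) (Set.Icc 0 T) s :=
    fun c s hs => HasDerivWithinAt.fun_sum fun i hi => (hw_ode i hi s hs).const_mul (c i)
  have hmass : ∀ s ∈ Set.Icc (0:ℝ) T, ∑ i ∈ Icc 1 n, (i : ℝ) * w i s ≤ norm0 := by
    intro s hs
    have h := le_mul_exp_of_hasDerivWithinAt_le (K := 0) (hmoment _) (fun s hs => by
      simpa using sum_natCast_mul_truncRHS_nonpos ha_nonneg ha_symm hp_le hN_mass (hw s hs)) s hs
    simp only [zero_mul, exp_zero, mul_one] at h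
    exact h.trans hnorm0
  intro t ht
  have h := le_mul_exp_of_hasDerivWithinAt_le (K := A * jq * norm0)
    (hmoment fun i => (i : ℝ) ^ q) (fun s hs =>
      (sum_rpow_mul_truncRHS_le hq.le hA.le hjq.le ha_nonneg ha_symm ha_bound hp_le hN_nonneg
        hN_mass hjq_ineq (hw s hs)).trans
      (mul_le_mul_of_nonneg_right
        (mul_le_mul_of_nonneg_left (hmass s (Set.Ico_subset_Icc_self hs)) (by positivity))
        (sum_nonneg fun i hi => mul_nonneg (rpow_nonneg i.cast_nonneg q) (hw s hs i hi)))) t ht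
  rwa [sub_zero, mul_comm] at h

/-- `q`-th moment estimate for the truncated solutions: if the first moment of
the initial data is at most `‖w⁰‖`, then
`∑_{i=1}^n i^q wᵢⁿ(t) ≤ exp(A ȷ_q ‖w⁰‖ t) ∑_{i=1}^n i^q wᵢ⁰` on `[0, T]`. -/
theorem truncated_q_moment_estimate
    (q : ℝ) (hq : 1 < q) (T : ℝ) (hT : 0 < T) (A : ℝ) (hA : 0 < A)
    (a p : ℕ → ℕ → ℝ) (N : ℕ → ℕ → ℕ → ℝ)
    (ha_nonneg : ∀ i j, 0 ≤ a i j) (ha_symm : ∀ i j, a i j = a j i)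
    (ha_bound : ∀ i j, 1 ≤ i → 1 ≤ j → a i j ≤ A * ((i : ℝ) + (j : ℝ)))
    (hp_nonneg : ∀ i j, 0 ≤ p i j) (hp_symm : ∀ i j, p i j = p j i)
    (hp_le : ∀ i j, p i j ≤ 1)
    (hN_nonneg : ∀ i j s, 0 ≤ N i j s) (hN_symm : ∀ i j s, N i j s = N j i s)
    (hN_mass : ∀ i j, 1 ≤ i → 1 ≤ j →
      ∑ s ∈ Finset.Icc 1 (i+j-1), (Nat.cast s : ℝ) * N i j s = (i : ℝ) + (j : ℝ))
    (n : ℕ) (hn : 2 ≤ n)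
    (w : ℕ → ℝ → ℝ)
    (hw_nonneg : ∀ i ∈ Finset.Icc 1 n, ∀ t ∈ Set.Icc (0:ℝ) T, 0 ≤ w i t)
    (hw_init_nonneg : ∀ i ∈ Finset.Icc 1 n, 0 ≤ w i 0)
    (hw_ode : ∀ i ∈ Finset.Icc 1 n, ∀ t ∈ Set.Icc (0:ℝ) T,
      HasDerivWithinAt (w i) (truncRHS a p N n i (fun j => w j t)) (Set.Icc 0 T) t)
    (norm0 : ℝ) (hnorm0 : ∑ i ∈ Finset.Icc 1 n, (Nat.cast i : ℝ) * w i 0 ≤ norm0)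
    (jq : ℝ) (hjq : 0 < jq)
    (hjq_ineq : ∀ i j : ℕ, 1 ≤ i → 1 ≤ j →
      ((i : ℝ) + (j : ℝ)) * (((i : ℝ) + (j : ℝ)) ^ q - (i : ℝ) ^ q - (j : ℝ) ^ q)
        ≤ jq * ((i : ℝ) * (j : ℝ) ^ q + (i : ℝ) ^ q * (j : ℝ))) :
    ∀ t ∈ Set.Icc (0:ℝ) T,
      ∑ i ∈ Finset.Icc 1 n, (Nat.cast i : ℝ) ^ q * w i t
        ≤ Real.exp (A * jq * norm0 * t)
            * ∑ i ∈ Finset.Icc 1 n, (Nat.cast i : ℝ) ^ q * w i 0 :=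
  truncated_q_moment_estimate_general q hq T A hA a p N ha_nonneg ha_symm ha_bound hp_le hN_nonneg
    hN_mass n w hw_nonneg hw_ode norm0 hnorm0 jq hjq hjq_ineq
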